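/- arXiv:2309.14039 — 2 statements merged into one kernel-verified Lean document; each statement's English description precedes it below -/
import Mathlib

section
/- Let K be the Kirchhoff matrix of a superport network with m > p: the n×n matrix with K_{ij} = −c_{ij} for i ≠ j and K_{ii} = Σ_{k=1}^n c_{ik}. Let K̃ be the matrix obtained from K by removing row n and column n; then K̃ is invertible. Let F := K̃^{−1} (rows and columns indexed by 1,…,n−1); let G be obtained from F by subtracting, for each non-root boundary vertex k with root(k) ≠ n, the column root(k) from the column k; let H be obtained from G by subtracting, for each non-root boundary vertex k with root(k) ≠ n, the row root(k) from the row k; and let H' be obtained from H by deleting the row and the column indexed by every root r ≠ n and by every interior vertex v ≠ n. Then H' is invertible and the response matrix L of the superport network equals H'^{−1}. -/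
open Finset BigOperators
open scoped Classical

namespace Superport

/-- A superport network: a finite connected simple graph on `Fin n` with conductances `c`
and `p` nonempty pairwise disjoint superports `A 0, …, A (p-1)` occupying the initial
segment of the vertices, ordered consecutively. -/
structure Network where
  n : ℕ
  p : ℕ
  graph : SimpleGraph (Fin n)
  c : Fin n → Fin n → ℝ
  A : Fin p → Finset (Fin n)
  p_pos : 0 < p
  connected : graph.Connected
  c_symm : ∀ k l, c k l = c l k
  c_pos : ∀ k l, graph.Adj k l → 0 < c k l
  c_zero : ∀ k l, ¬ graph.Adj k l → c k l = 0
  A_nonempty : ∀ i, (A i).Nonempty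
  A_disjoint : ∀ i j, i ≠ j → Disjoint (A i) (A j)
  A_ordered : ∀ i j u v, i < j → u ∈ A i → v ∈ A j → u < v
  boundary_initial : ∀ v : Fin n, (∃ i, v ∈ A i) ↔ (v : ℕ) < ∑ i, (A i).card

namespace Network

variable (N : Network)

/-- The set of boundary vertices. -/
def M : Finset (Fin N.n) := Finset.univ.biUnion N.A

/-- The number of boundary vertices. -/
def m : ℕ := N.M.card

theorem mem_M_iff {v : Fin N.n} : v ∈ N.M ↔ ∃ i, v ∈ N.A i := by
  simp [M, Finset.mem_biUnion]

/-- The root of the superport of a boundary vertex `v` (the vertex of maximal number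
in the superport containing `v`); for interior `v` we set `root v = v`. -/
noncomputable def root (v : Fin N.n) : Fin N.n :=
  if h : ∃ i, v ∈ N.A i then (N.A h.choose).max' ⟨v, h.choose_spec⟩ else v

/-- The index of the last superport. -/
def lastPort : Fin N.p := ⟨N.p - 1, Nat.sub_lt N.p_pos Nat.one_pos⟩

theorem M_nonempty : N.M.Nonempty := by
  obtain ⟨v, hv⟩ := N.A_nonempty N.lastPort
  exact ⟨v, N.mem_M_iff.mpr ⟨N.lastPort, hv⟩⟩

theorem root_mem {v : Fin N.n} (hv : v ∈ N.M) : N.root v ∈ N.M := by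
  have h : ∃ i, v ∈ N.A i := N.mem_M_iff.mp hv
  rw [root, dif_pos h]
  exact N.mem_M_iff.mpr ⟨h.choose, (N.A h.choose).max'_mem _⟩

theorem root_eq_self_of_max {v : Fin N.n} (hv : v ∈ N.M) (hmax : ∀ u ∈ N.M, u ≤ v) :
    N.root v = v := by
  have h : ∃ i, v ∈ N.A i := N.mem_M_iff.mp hv
  rw [root, dif_pos h]
  exact le_antisymm (hmax _ (N.mem_M_iff.mpr ⟨h.choose, (N.A h.choose).max'_mem _⟩))
    (Finset.le_max' _ _ h.choose_spec)

/-- Axioms (C), (I), (P), (B) for voltages `U`, currents `I`, and prescribed voltage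
differences `ΔU` (only the values of `ΔU` at non-root boundary vertices are relevant). -/
def Axioms (ΔU U : Fin N.n → ℝ) (I : Fin N.n → Fin N.n → ℝ) : Prop :=
  (∀ k l, I k l = N.c k l * (U k - U l)) ∧
  (∀ k, k ∉ N.M → ∑ l, I k l = 0) ∧
  (∀ i : Fin N.p, i ≠ N.lastPort → ∑ k ∈ N.A i, ∑ l, I k l = 0) ∧
  (∀ k, k ∈ N.M → N.root k ≠ k → U k - U (N.root k) = ΔU k)

/-- The weight of a subgraph: the product of the conductances of its edges. -/
noncomputable def weight (H : SimpleGraph (Fin N.n)) : ℝ :=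
  ∏ e ∈ (Set.toFinite H.edgeSet).toFinset, Sym2.lift ⟨N.c, N.c_symm⟩ e

/-- The number of edges of a subgraph. -/
noncomputable def edgeCount (H : SimpleGraph (Fin N.n)) : ℕ :=
  (Set.toFinite H.edgeSet).toFinset.card

/-- Two vertices lie in a common superport. -/
def samePort (u v : Fin N.n) : Prop := ∃ i, u ∈ N.A i ∧ v ∈ N.A i

/-- The `X`-equivalence: two boundary vertices not in `X` are equivalent iff they lie in
the same superport; each interior vertex and each vertex of `X` forms a singleton class.
For `X = ∅` this is the equivalence relation `∼`. -/
def xSetoid (X : Set (Fin N.n)) : Setoid (Fin N.n) where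
  r u v := u = v ∨ (u ∉ X ∧ v ∉ X ∧ N.samePort u v)
  iseqv := by
    constructor
    · intro u; exact Or.inl rfl
    · rintro u v (rfl | ⟨hu, hv, i, hui, hvi⟩)
      · exact Or.inl rfl
      · exact Or.inr ⟨hv, hu, i, hvi, hui⟩
    · rintro u v w huv hvw
      rcases huv with rfl | ⟨hu, hv, i, hui, hvi⟩
      · exact hvw
      rcases hvw with rfl | ⟨hv', hw, j, hvj, hwj⟩
      · exact Or.inr ⟨hu, hv, i, hui, hvi⟩
      · have hij : i = j := by
          by_contra hij
          exact (Finset.disjoint_left.mp (N.A_disjoint i j hij) hvi) hvj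
        exact Or.inr ⟨hu, hw, i, hui, hij ▸ hwj⟩

/-- The quotient of a graph `H` by an equivalence relation `s`: classes `a ≠ b` are
adjacent iff some representatives are adjacent in `H`. -/
def quotGraph (H : SimpleGraph (Fin N.n)) (s : Setoid (Fin N.n)) :
    SimpleGraph (Quotient s) where
  Adj a b := a ≠ b ∧ ∃ u v, H.Adj u v ∧ Quotient.mk s u = a ∧ Quotient.mk s v = b
  symm := by
    refine ⟨?_⟩
    rintro a b ⟨hab, u, v, huv, hu, hv⟩
    exact ⟨hab.symm, v, u, huv.symm, hv, hu⟩
  loopless := by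
    refine ⟨?_⟩
    rintro a ⟨hab, -⟩
    exact hab rfl

/-- A spanning forest of the network. -/
def IsSpanningForest (H : SimpleGraph (Fin N.n)) : Prop := H ≤ N.graph ∧ H.IsAcyclic

/-- A spanning forest becomes a spanning tree in the quotient by the `X`-equivalence
(in the multigraph sense): the quotient is connected and the number of edges of the
forest is one less than the number of equivalence classes.  For `X = {i}` this is
"valid relative to the vertex `i`"; for `X = ∅` this is "valid". -/
def IsValidRel (X : Set (Fin N.n)) (H : SimpleGraph (Fin N.n)) : Prop :=
  N.IsSpanningForest H ∧ (N.quotGraph H (N.xSetoid X)).Connected ∧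
    N.edgeCount H + 1 = Nat.card (Quotient (N.xSetoid X))

/-- A valid forest: a spanning forest which becomes a spanning tree in the quotient
by the equivalence `∼`. -/
def IsValidForest (H : SimpleGraph (Fin N.n)) : Prop := N.IsValidRel ∅ H

/-- The sign `sgn(H, i, j)` of a spanning forest `H` with respect to vertices `i, j`. -/
noncomputable def sgnIJ (H : SimpleGraph (Fin N.n)) (i j : Fin N.n) : ℝ :=
  if i = j ∨ ¬ (N.quotGraph H (N.xSetoid {i, j})).Reachable
      (Quotient.mk (N.xSetoid {i, j}) i) (Quotient.mk (N.xSetoid {i, j}) j)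
  then 1 else -1

/-- The type of non-root boundary vertices. -/
abbrev NonRoot := {v : Fin N.n // v ∈ N.M ∧ N.root v ≠ v}

/-- The type of boundary vertices. -/
abbrev Bdry := {v : Fin N.n // v ∈ N.M}

/-- `L` is the response matrix of the superport network: for any admissible voltages and
currents, the incoming currents at the non-root boundary vertices are obtained from the
prescribed voltage differences by multiplication by `L`. -/
def IsResponse (L : Matrix N.NonRoot N.NonRoot ℝ) : Prop :=
  ∀ (ΔU U : Fin N.n → ℝ) (I : Fin N.n → Fin N.n → ℝ), N.Axioms ΔU U I →
    ∀ x : N.NonRoot, (∑ l, I x.1 l) = ∑ y : N.NonRoot, L x y * ΔU y.1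

/-- `C` is the response matrix of the electrical network obtained by unifying all the
superports: same graph and conductances, boundary vertices `M`; axioms (C) and (I). -/
def IsElecResponse (C : Matrix N.Bdry N.Bdry ℝ) : Prop :=
  ∀ (Ub : N.Bdry → ℝ) (U : Fin N.n → ℝ) (I : Fin N.n → Fin N.n → ℝ),
    (∀ k l, I k l = N.c k l * (U k - U l)) →
    (∀ k, k ∉ N.M → ∑ l, I k l = 0) →
    (∀ v : N.Bdry, U v.1 = Ub v) →
    ∀ v : N.Bdry, (∑ l, I v.1 l) = ∑ u : N.Bdry, C v u * Ub u

/-- The sum of the weights of all valid forests. -/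
noncomputable def validForestSum : ℝ :=
  ∑ H ∈ Finset.univ.filter (fun H => N.IsValidForest H), N.weight H

end Network
end Superport

namespace Superport
namespace Network

variable (N : Network)

theorem n_pos : 0 < N.n := N.connected.nonempty.some.pos

/-- The last vertex of the network. -/
def lastAll : Fin N.n := ⟨N.n - 1, Nat.sub_lt N.n_pos Nat.one_pos⟩

theorem nonroot_ne_lastAll {v : Fin N.n} (hv : v ∈ N.M) (hr : N.root v ≠ v) :
    v ≠ N.lastAll := by
  intro hEq
  apply hr
  subst hEq
  apply N.root_eq_self_of_max hv
  intro u _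
  have hu : (u : ℕ) < N.n := u.isLt
  exact Fin.le_def.mpr (by simp only [lastAll]; omega)

/-- The Kirchhoff matrix of the network. -/
noncomputable def Kmatrix : Matrix (Fin N.n) (Fin N.n) ℝ :=
  fun i j => if i = j then ∑ k, N.c i k else - N.c i j

/-- Vertices other than the last one. -/
abbrev VertNotLast := {v : Fin N.n // v ≠ N.lastAll}

/-- `K̃`: the Kirchhoff matrix with the last row and column removed. -/
noncomputable def Ktilde : Matrix N.VertNotLast N.VertNotLast ℝ :=
  fun v w => N.Kmatrix v.1 w.1

/-- Step 2 of the K2L algorithm: for each non-root boundary vertex `k` with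
`root k ≠` the last vertex, subtract the column `root k` from the column `k`. -/
noncomputable def stepColK (F : Matrix N.VertNotLast N.VertNotLast ℝ) :
    Matrix N.VertNotLast N.VertNotLast ℝ :=
  fun v w =>
    if h : w.1 ∈ N.M ∧ N.root w.1 ≠ w.1 ∧ N.root w.1 ≠ N.lastAll then
      F v w - F v ⟨N.root w.1, h.2.2⟩
    else F v w

/-- Step 3 of the K2L algorithm: the same operation on rows. -/
noncomputable def stepRowK (G : Matrix N.VertNotLast N.VertNotLast ℝ) :
    Matrix N.VertNotLast N.VertNotLast ℝ :=
  fun v w =>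
    if h : v.1 ∈ N.M ∧ N.root v.1 ≠ v.1 ∧ N.root v.1 ≠ N.lastAll then
      G v w - G ⟨N.root v.1, h.2.2⟩ w
    else G v w

/-- Step 4 of the K2L algorithm: delete the rows and columns of all roots and interior
vertices, i.e. keep only the non-root boundary vertices. -/
noncomputable def restrictNonRootK (H : Matrix N.VertNotLast N.VertNotLast ℝ) :
    Matrix N.NonRoot N.NonRoot ℝ :=
  fun v w => H ⟨v.1, N.nonroot_ne_lastAll v.2.1 v.2.2⟩ ⟨w.1, N.nonroot_ne_lastAll w.2.1 w.2.2⟩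

/-! Ground the last vertex. Since `K` is the Laplacian of a connected graph with positive
weights, `2 Uᵀ K U = ∑ c_kl (U_k - U_l)²`; hence a potential in the kernel of `K̃`, extended by
`0` at the ground, is constant and vanishes, so `K̃` is invertible.

For a non-root boundary vertex `y`, let a unit current enter at `y` and leave at `root y`.
Applying `K̃⁻¹` to it gives grounded potentials `U` satisfying all the axioms, and the column
and row operations turn column `y` of `K̃⁻¹` into the voltage differences `U t - U (root t)`:
column `y` of `H'` is the input whose response is the unit current at `y`, so `L H' = 1`. -/

open Matrix

theorem c_self (k : Fin N.n) : N.c k k = 0 := N.c_zero k k (N.graph.loopless.irrefl k)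

theorem c_nonneg (k l : Fin N.n) : 0 ≤ N.c k l := by
  by_cases h : N.graph.Adj k l
  · exact (N.c_pos k l h).le
  · rw [N.c_zero k l h]

theorem root_eq_max' {v : Fin N.n} {i : Fin N.p} (hv : v ∈ N.A i) :
    N.root v = (N.A i).max' ⟨v, hv⟩ := by
  have hex : ∃ j, v ∈ N.A j := ⟨i, hv⟩
  have key : ∀ j (hj : v ∈ N.A j), (N.A j).max' ⟨v, hj⟩ = (N.A i).max' ⟨v, hv⟩ := by
    intro j hj
    obtain rfl : j = i := by
      by_contra hji
      exact Finset.disjoint_left.mp (N.A_disjoint j i hji) hj hv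
    rfl
  rw [root, dif_pos hex, key _ hex.choose_spec]

theorem root_mem_A {v : Fin N.n} {i : Fin N.p} (hv : v ∈ N.A i) : N.root v ∈ N.A i := by
  rw [N.root_eq_max' hv]
  exact Finset.max'_mem _ _

theorem root_mem_A_iff {v : Fin N.n} (hv : v ∈ N.M) {i : Fin N.p} :
    N.root v ∈ N.A i ↔ v ∈ N.A i := by
  obtain ⟨j, hj⟩ := N.mem_M_iff.mp hv
  refine ⟨fun hi => ?_, N.root_mem_A⟩
  obtain rfl : i = j := by
    by_contra hij
    exact Finset.disjoint_left.mp (N.A_disjoint i j hij) hi (N.root_mem_A hj)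
  exact hj

theorem root_root {v : Fin N.n} (hv : v ∈ N.M) : N.root (N.root v) = N.root v := by
  obtain ⟨i, hi⟩ := N.mem_M_iff.mp hv
  rw [N.root_eq_max' (N.root_mem_A hi)]
  exact (N.root_eq_max' hi).symm

theorem Kmatrix_eq : N.Kmatrix = diagonal (fun k => ∑ l, N.c k l) - of N.c := by
  ext k l
  by_cases h : k = l
  · subst h; simp [Kmatrix, N.c_self]
  · simp [Kmatrix, h]

theorem Kmatrix_mulVec_apply (U : Fin N.n → ℝ) (k : Fin N.n) :
    (N.Kmatrix *ᵥ U) k = ∑ l, N.c k l * (U k - U l) := by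
  rw [Kmatrix_eq, sub_mulVec, Pi.sub_apply, mulVec_diagonal, Finset.sum_mul, mulVec, dotProduct]
  simp only [mul_sub, Finset.sum_sub_distrib, of_apply]

theorem sum_sum_c_mul_swap (f : Fin N.n → Fin N.n → ℝ) :
    ∑ k, ∑ l, N.c k l * f k l = ∑ k, ∑ l, N.c k l * f l k := by
  rw [Finset.sum_comm]
  simp_rw [N.c_symm]

theorem sum_Kmatrix_mulVec (U : Fin N.n → ℝ) : ∑ k, (N.Kmatrix *ᵥ U) k = 0 := by
  simp_rw [Kmatrix_mulVec_apply, mul_sub, Finset.sum_sub_distrib]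
  rw [sub_eq_zero, N.sum_sum_c_mul_swap (fun k _ => U k)]

theorem two_mul_dotProduct_Kmatrix_mulVec (U : Fin N.n → ℝ) :
    2 * (U ⬝ᵥ N.Kmatrix *ᵥ U) = ∑ k, ∑ l, N.c k l * (U k - U l) ^ 2 := by
  have hfwd : U ⬝ᵥ N.Kmatrix *ᵥ U = ∑ k, ∑ l, N.c k l * ((U k - U l) * U k) := by
    simp_rw [dotProduct, Kmatrix_mulVec_apply, Finset.mul_sum]
    exact Finset.sum_congr rfl fun _ _ => Finset.sum_congr rfl fun _ _ => by ring
  have hbwd : U ⬝ᵥ N.Kmatrix *ᵥ U = ∑ k, ∑ l, N.c k l * (-(U k - U l) * U l) := by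
    rw [hfwd, N.sum_sum_c_mul_swap]
    exact Finset.sum_congr rfl fun _ _ => Finset.sum_congr rfl fun _ _ => by ring
  rw [two_mul]
  nth_rw 1 [hfwd]
  rw [hbwd, ← Finset.sum_add_distrib]
  refine Finset.sum_congr rfl fun _ _ => ?_
  rw [← Finset.sum_add_distrib]
  exact Finset.sum_congr rfl fun _ _ => by ring

theorem eq_of_dotProduct_Kmatrix_mulVec_eq_zero {U : Fin N.n → ℝ}
    (hU : U ⬝ᵥ N.Kmatrix *ᵥ U = 0) (k l : Fin N.n) : U k = U l := by
  have hnonneg : ∀ k l, 0 ≤ N.c k l * (U k - U l) ^ 2 :=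
    fun k l => mul_nonneg (N.c_nonneg k l) (sq_nonneg _)
  have henergy : ∑ k, ∑ l, N.c k l * (U k - U l) ^ 2 = 0 := by
    rw [← two_mul_dotProduct_Kmatrix_mulVec, hU, mul_zero]
  have hadj : ∀ k l, N.graph.Adj k l → U k = U l := by
    intro k l hkl
    have hterm := (Finset.sum_eq_zero_iff_of_nonneg fun l _ => hnonneg k l).mp
      ((Finset.sum_eq_zero_iff_of_nonneg fun k _ => Finset.sum_nonneg fun l _ => hnonneg k l).mp
        henergy k (Finset.mem_univ k)) l (Finset.mem_univ l)
    rw [mul_eq_zero, pow_eq_zero_iff two_ne_zero, sub_eq_zero] at hterm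
    exact hterm.resolve_left (N.c_pos k l hkl).ne'
  obtain ⟨walk⟩ := N.connected.preconnected k l
  induction walk with
  | nil => rfl
  | cons h _ ih => exact (hadj _ _ h).trans ih

noncomputable def extendZero (u : N.VertNotLast → ℝ) : Fin N.n → ℝ :=
  fun k => if h : k = N.lastAll then 0 else u ⟨k, h⟩

theorem extendZero_lastAll (u : N.VertNotLast → ℝ) : N.extendZero u N.lastAll = 0 := dif_pos rfl

theorem extendZero_of_ne (u : N.VertNotLast → ℝ) {k : Fin N.n} (hk : k ≠ N.lastAll) :
    N.extendZero u k = u ⟨k, hk⟩ := dif_neg hk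

theorem extendZero_dotProduct (u : N.VertNotLast → ℝ) (b : Fin N.n → ℝ) :
    N.extendZero u ⬝ᵥ b = u ⬝ᵥ (b ∘ Subtype.val) := by
  rw [dotProduct, Fintype.sum_eq_add_sum_subtype_ne _ N.lastAll, extendZero_lastAll, zero_mul,
    zero_add]
  exact Finset.sum_congr rfl fun v _ => by rw [N.extendZero_of_ne u v.2]; rfl

theorem Ktilde_mulVec (u : N.VertNotLast → ℝ) :
    N.Ktilde *ᵥ u = (N.Kmatrix *ᵥ N.extendZero u) ∘ Subtype.val := by
  ext v
  change N.Ktilde v ⬝ᵥ u = N.Kmatrix v.1 ⬝ᵥ N.extendZero u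
  rw [dotProduct_comm (N.Kmatrix v.1), extendZero_dotProduct, dotProduct_comm]
  rfl

theorem isUnit_Ktilde : IsUnit N.Ktilde := by
  rw [isUnit_iff_isUnit_det, isUnit_iff_ne_zero, Ne, ← exists_mulVec_eq_zero_iff]
  rintro ⟨u, hu0, hu⟩
  have henergy : N.extendZero u ⬝ᵥ N.Kmatrix *ᵥ N.extendZero u = 0 := by
    rw [extendZero_dotProduct, ← Ktilde_mulVec, hu, dotProduct_zero]
  refine hu0 (funext fun v => ?_)
  rw [← N.extendZero_of_ne u v.2, N.eq_of_dotProduct_Kmatrix_mulVec_eq_zero henergy v.1 N.lastAll,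
    extendZero_lastAll]
  rfl

theorem Kmatrix_mulVec_extendZero_inv {b : Fin N.n → ℝ} (hb : ∑ k, b k = 0) :
    N.Kmatrix *ᵥ N.extendZero (N.Ktilde⁻¹ *ᵥ (b ∘ Subtype.val)) = b := by
  set U := N.extendZero (N.Ktilde⁻¹ *ᵥ (b ∘ Subtype.val))
  have hdet : IsUnit N.Ktilde.det := (isUnit_iff_isUnit_det _).mp N.isUnit_Ktilde
  have hoff : N.Ktilde *ᵥ (N.Ktilde⁻¹ *ᵥ (b ∘ Subtype.val)) = b ∘ Subtype.val := by
    rw [mulVec_mulVec, mul_nonsing_inv _ hdet, one_mulVec]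
  rw [Ktilde_mulVec] at hoff
  have hsum := N.sum_Kmatrix_mulVec U
  rw [Fintype.sum_eq_add_sum_subtype_ne _ N.lastAll] at hsum hb
  ext k
  by_cases hk : k = N.lastAll
  · subst hk
    have hrest : ∑ v : N.VertNotLast, (N.Kmatrix *ᵥ U) v.1 = ∑ v : N.VertNotLast, b v.1 :=
      Finset.sum_congr rfl fun v _ => congrFun hoff v
    linarith
  · exact congrFun hoff ⟨k, hk⟩

/-- The unit current entering the network at `y` and leaving it at `root y`. -/
noncomputable def dipole (y : Fin N.n) : Fin N.n → ℝ := Pi.single y 1 - Pi.single (N.root y) 1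

theorem sum_dipole (y : Fin N.n) : ∑ k, N.dipole y k = 0 := by
  simp [dipole, Finset.sum_sub_distrib]

theorem dipole_eq_zero_of_notMem {y k : Fin N.n} (hy : y ∈ N.M) (hk : k ∉ N.M) :
    N.dipole y k = 0 := by
  have hky : k ≠ y := fun h => hk (h ▸ hy)
  have hkr : k ≠ N.root y := fun h => hk (h ▸ N.root_mem hy)
  simp [dipole, hky, hkr]

theorem sum_dipole_A {y : Fin N.n} (hy : y ∈ N.M) (i : Fin N.p) :
    ∑ k ∈ N.A i, N.dipole y k = 0 := by
  simp [dipole, Finset.sum_sub_distrib, N.root_mem_A_iff hy]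

theorem dipole_nonRoot (x y : N.NonRoot) : N.dipole y.1 x.1 =
    (1 : Matrix N.NonRoot N.NonRoot ℝ) x y := by
  have hxr : x.1 ≠ N.root y.1 := fun h => x.2.2 (by rw [h, N.root_root y.2.1])
  simp [dipole, Pi.single_apply, hxr, one_apply, Subtype.ext_iff]

theorem axioms_of_Kmatrix_mulVec {U : Fin N.n → ℝ}
    (hinterior : ∀ k ∉ N.M, (N.Kmatrix *ᵥ U) k = 0)
    (hport : ∀ i, ∑ k ∈ N.A i, (N.Kmatrix *ᵥ U) k = 0) :
    N.Axioms (fun k => U k - U (N.root k)) U (fun k l => N.c k l * (U k - U l)) := by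
  refine ⟨fun _ _ => rfl, fun k hk => ?_, fun i _ => ?_, fun _ _ _ => rfl⟩
  · simpa only [Kmatrix_mulVec_apply] using hinterior k hk
  · simpa only [Kmatrix_mulVec_apply] using hport i

theorem stepColK_apply (F : Matrix N.VertNotLast N.VertNotLast ℝ) (v w : N.VertNotLast)
    (hw : w.1 ∈ N.M) (hwr : N.root w.1 ≠ w.1) :
    N.stepColK F v w = N.extendZero (F v) w - N.extendZero (F v) (N.root w) := by
  rw [stepColK, N.extendZero_of_ne _ w.2]
  by_cases hr : N.root w.1 = N.lastAll
  · rw [dif_neg fun h => h.2.2 hr, hr, extendZero_lastAll, sub_zero]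
  · rw [dif_pos ⟨hw, hwr, hr⟩, N.extendZero_of_ne _ hr]

theorem stepRowK_apply (G : Matrix N.VertNotLast N.VertNotLast ℝ) (v w : N.VertNotLast)
    (hv : v.1 ∈ N.M) (hvr : N.root v.1 ≠ v.1) :
    N.stepRowK G v w = N.extendZero (Gᵀ w) v - N.extendZero (Gᵀ w) (N.root v) := by
  rw [stepRowK, N.extendZero_of_ne _ v.2]
  by_cases hr : N.root v.1 = N.lastAll
  · rw [dif_neg fun h => h.2.2 hr, hr, extendZero_lastAll, sub_zero]
    rfl
  · rw [dif_pos ⟨hv, hvr, hr⟩, N.extendZero_of_ne _ hr]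
    rfl

theorem restrictNonRootK_stepRowK_stepColK_apply (F : Matrix N.VertNotLast N.VertNotLast ℝ)
    (t y : N.NonRoot) :
    N.restrictNonRootK (N.stepRowK (N.stepColK F)) t y =
      N.extendZero (F *ᵥ (N.dipole y.1 ∘ Subtype.val)) t.1 -
        N.extendZero (F *ᵥ (N.dipole y.1 ∘ Subtype.val)) (N.root t.1) := by
  have hcol : (N.stepColK F)ᵀ ⟨y.1, N.nonroot_ne_lastAll y.2.1 y.2.2⟩ =
      F *ᵥ (N.dipole y.1 ∘ Subtype.val) := by
    ext v
    rw [transpose_apply, N.stepColK_apply F v _ y.2.1 y.2.2, mulVec,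
      ← extendZero_dotProduct, dipole, dotProduct_sub, dotProduct_single, dotProduct_single,
      mul_one, mul_one]
  rw [restrictNonRootK, N.stepRowK_apply _ _ _ t.2.1 t.2.2, hcol]

end Network

theorem response_from_kirchhoff_matrix_general (N : Network)
    (L : Matrix N.NonRoot N.NonRoot ℝ) (hL : N.IsResponse L) :
    IsUnit N.Ktilde ∧
    IsUnit (N.restrictNonRootK (N.stepRowK (N.stepColK N.Ktilde⁻¹))) ∧
    L = (N.restrictNonRootK (N.stepRowK (N.stepColK N.Ktilde⁻¹)))⁻¹ := by
  have hLH : L * N.restrictNonRootK (N.stepRowK (N.stepColK N.Ktilde⁻¹)) = 1 := by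
    ext x y
    set U := N.extendZero (N.Ktilde⁻¹.mulVec (N.dipole y.1 ∘ Subtype.val))
    have hU : N.Kmatrix.mulVec U = N.dipole y.1 :=
      N.Kmatrix_mulVec_extendZero_inv (N.sum_dipole y.1)
    have haxioms := N.axioms_of_Kmatrix_mulVec (U := U)
      (fun k hk => hU ▸ N.dipole_eq_zero_of_notMem y.2.1 hk)
      (fun i => hU ▸ N.sum_dipole_A y.2.1 i)
    have hresp := hL _ U _ haxioms x
    rw [← Network.Kmatrix_mulVec_apply, hU, Network.dipole_nonRoot] at hresp
    simp_rw [Matrix.mul_apply, hresp, Network.restrictNonRootK_stepRowK_stepColK_apply]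
    rfl
  exact ⟨N.isUnit_Ktilde, IsUnit.of_mul_eq_one_right L hLH, (Matrix.inv_eq_left_inv hLH).symm⟩

/-- **The K2L algorithm** (Corollary 5.3): the response matrix `L` of a superport network
is obtained from its Kirchhoff matrix `K` by: removing the last row and column and
inverting; subtracting the column (row) `root k` from the column (row) `k` for each
non-root boundary vertex `k` with `root k` different from the last vertex; deleting the
rows and columns of all roots and all interior vertices distinct from the last vertex;
and inverting the result. -/
theorem response_from_kirchhoff_matrix (N : Network) (hmp : N.p < N.m)
    (L : Matrix N.NonRoot N.NonRoot ℝ) (hL : N.IsResponse L) :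
    IsUnit N.Ktilde ∧
    IsUnit (N.restrictNonRootK (N.stepRowK (N.stepColK N.Ktilde⁻¹))) ∧
    L = (N.restrictNonRootK (N.stepRowK (N.stepColK N.Ktilde⁻¹)))⁻¹ :=
  response_from_kirchhoff_matrix_general N L hL

end Superport
end

section
/- Consider an electrical circuit with exactly two boundary vertices 1 and 2 and prescribed voltages U_1 = 1 and U_2 = 0. Then w(1|2) > 0, and for every ordered pair of vertices k,l the current satisfies I_{kl} · w(1|2) = Σ_{T_{kl}} w(T_{kl}) − Σ_{T_{lk}} w(T_{lk}), where w(1|2) denotes the sum of the weights of all spanning forests with exactly two components such that 1 and 2 lie in different components, and the sums on the right are over all spanning trees T_{kl} (respectively T_{lk}) such that the unique oriented path from 1 to 2 in the tree traverses the edge kl in the direction from k to l (respectively from l to k). -/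
open Finset BigOperators
open scoped Classical

namespace ElecNet

/-- An electrical network with `m` terminals: a finite connected simple graph on `Fin n`
whose boundary vertices are `0, …, m-1`, with symmetric conductances which are positive
exactly on the edges. -/
structure Network where
  n : ℕ
  m : ℕ
  graph : SimpleGraph (Fin n)
  c : Fin n → Fin n → ℝ
  m_pos : 0 < m
  m_le : m ≤ n
  connected : graph.Connected
  c_symm : ∀ k l, c k l = c l k
  c_pos : ∀ k l, graph.Adj k l → 0 < c k l
  c_zero : ∀ k l, ¬ graph.Adj k l → c k l = 0

namespace Network

variable (E : Network)

/-- The type of boundary vertices. -/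
abbrev Bdry := {v : Fin E.n // (v : ℕ) < E.m}

/-- The weight of a subgraph: the product of the conductances of its edges. -/
noncomputable def weight (H : SimpleGraph (Fin E.n)) : ℝ :=
  ∏ e ∈ (Set.toFinite H.edgeSet).toFinset, Sym2.lift ⟨E.c, E.c_symm⟩ e

/-- A spanning forest of the network. -/
def IsSpanningForest (H : SimpleGraph (Fin E.n)) : Prop := H ≤ E.graph ∧ H.IsAcyclic

/-- A valid forest of the electrical network: a spanning forest each of whose components
contains exactly one boundary vertex. -/
def IsValidForest (H : SimpleGraph (Fin E.n)) : Prop :=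
  E.IsSpanningForest H ∧
    ∀ comp : H.ConnectedComponent,
      (Finset.univ.filter
        (fun v : Fin E.n => (v : ℕ) < E.m ∧ H.connectedComponentMk v = comp)).card = 1

/-- `C` is the response matrix of the electrical network: for any voltages and currents
satisfying axioms (C) and (I), the incoming currents at the boundary vertices are obtained
from the prescribed boundary voltages by multiplication by `C`. -/
def IsResponse (C : Matrix E.Bdry E.Bdry ℝ) : Prop :=
  ∀ (Ub : E.Bdry → ℝ) (U : Fin E.n → ℝ) (I : Fin E.n → Fin E.n → ℝ),
    (∀ k l, I k l = E.c k l * (U k - U l)) →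
    (∀ k : Fin E.n, E.m ≤ (k : ℕ) → ∑ l, I k l = 0) →
    (∀ v : E.Bdry, U v.1 = Ub v) →
    ∀ v : E.Bdry, (∑ l, I v.1 l) = ∑ u : E.Bdry, C v u * Ub u

end Network
end ElecNet

/-! Let `D` (`separatingWeight`) be the weight of the two-forests separating `v₀` from `v₁`,
and `N z` (`forestPotential`) the weight of those in which `z` lies in the tree of `v₀`.
Adding the edge `kl` to such a forest with `k` on the side of `v₀` and `l` on the side of `v₁` is
a bijection onto the spanning trees whose `v₀`–`v₁` path runs through `kl` from `k` to `l`, and it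
multiplies weights by `c k l`; hence `c k l * (N k - N l)` is the signed tree sum of the theorem.
A path enters and leaves each of its interior vertices equally often, so `N` is harmonic away
from `v₀, v₁`, where it takes the values `D` and `0`. By the energy identity
`∑ c k l * (f k - f l)² = 2 * ∑ f k * (Δf) k`, a function on a connected network that is harmonic
at the interior vertices and vanishes at the boundary is zero; so `N = D * U`, and Ohm's law
gives the formula. Cutting an edge of the `v₀`–`v₁` path of a spanning tree gives a separating
two-forest, so `D > 0`. -/

theorem Finset.sum_sum_mul_sub_sq {ι R : Type*} [Fintype ι] [CommRing R] {c : ι → ι → R}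
    (hc : ∀ i j, c i j = c j i) (f : ι → R) :
    ∑ i, ∑ j, c i j * (f i - f j) ^ 2 = 2 * ∑ i, f i * ∑ j, c i j * (f i - f j) := by
  calc ∑ i, ∑ j, c i j * (f i - f j) ^ 2
      = ∑ i, ∑ j, f i * (c i j * (f i - f j)) + ∑ i, ∑ j, f j * (c j i * (f j - f i)) := by
        simp only [← Finset.sum_add_distrib]
        exact Finset.sum_congr rfl fun i _ => Finset.sum_congr rfl fun j _ => by rw [hc]; ring
    _ = 2 * ∑ i, f i * ∑ j, c i j * (f i - f j) := by
        rw [Finset.sum_comm (f := fun i j => f j * (c j i * (f j - f i))), ← two_mul]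
        simp only [Finset.mul_sum]

theorem List.Nodup.card_filter_mem_eq_count_map_fst {α β : Type*} [Fintype β]
    {L : List (α × β)} (hL : L.Nodup) (a : α) :
    #{b | (a, b) ∈ L} = (L.map Prod.fst).count a := by
  rw [List.count_eq_countP, List.countP_map, List.countP_eq_length_filter,
    ← List.toFinset_card_of_nodup (hL.filter _)]
  refine Finset.card_nbij' (fun b => (a, b)) Prod.snd ?_ ?_ (fun _ _ => rfl) ?_
  · intro b hb
    simpa using hb
  · rintro ⟨a', b⟩ h
    obtain ⟨h, rfl⟩ : (a', b) ∈ L ∧ a' = a := by simpa using h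
    simpa using h
  · rintro ⟨a', b⟩ h
    obtain ⟨-, rfl⟩ : (a', b) ∈ L ∧ a' = a := by simpa using h
    rfl

namespace SimpleGraph

variable {V : Type*} {G : SimpleGraph V}

theorem Reachable.apply_eq_of_forall_adj {α : Type*} {f : V → α}
    (hf : ∀ u v, G.Adj u v → f u = f v) {x y : V} (h : G.Reachable x y) : f x = f y := by
  obtain ⟨p⟩ := h
  induction p with
  | nil => rfl
  | cons hadj _ ih => exact (hf _ _ hadj).trans ih

theorem Reachable.deleteEdges_or {a b x : V} (h : G.Reachable x a) :
    (G.deleteEdges {s(a, b)}).Reachable x a ∨ (G.deleteEdges {s(a, b)}).Reachable x b := by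
  obtain ⟨p⟩ := h
  induction p with
  | nil => exact .inl .rfl
  | @cons x y a hadj _ ih =>
    by_cases he : s(x, y) = s(a, b)
    · rcases Sym2.eq_iff.mp he with ⟨rfl, -⟩ | ⟨rfl, -⟩
      · exact .inl .rfl
      · exact .inr .rfl
    · have : (G.deleteEdges {s(a, b)}).Adj x y := by simp [hadj, he]
      exact ih.imp this.reachable.trans this.reachable.trans

theorem card_connectedComponent_eq_two_iff {a b : V} (hab : ¬ G.Reachable a b) :
    Nat.card G.ConnectedComponent = 2 ↔ ∀ x, G.Reachable x a ∨ G.Reachable x b := by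
  have hne : G.connectedComponentMk b ≠ G.connectedComponentMk a :=
    fun h => hab (ConnectedComponent.exact h).symm
  rw [Nat.card_eq_two_iff' (G.connectedComponentMk a)]
  constructor
  · rintro ⟨c, -, hc⟩ x
    by_cases hx : G.connectedComponentMk x = G.connectedComponentMk a
    · exact .inl (ConnectedComponent.exact hx)
    · exact .inr (ConnectedComponent.exact ((hc _ hx).trans (hc _ hne).symm))
  · intro h
    refine ⟨_, hne, fun c hc => ?_⟩
    induction c using ConnectedComponent.ind with
    | h x => exact ConnectedComponent.sound ((h x).resolve_left fun hx =>
        hc (ConnectedComponent.sound hx))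

theorem Walk.count_map_fst_darts_eq_count_map_snd_darts {u v z : V} (p : G.Walk u v)
    (hu : z ≠ u) (hv : z ≠ v) :
    (p.darts.map (·.fst)).count z = (p.darts.map (·.snd)).count z := by
  have hfst := congrArg (List.count z) p.map_fst_darts_append
  have hsnd := congrArg (List.count z) p.cons_map_snd_darts
  simp only [List.count_append, List.count_cons, List.count_nil, beq_iff_eq, hu.symm, hv.symm,
    if_false, add_zero] at hfst hsnd
  exact hfst.trans hsnd.symm

theorem Walk.IsPath.card_out_eq_card_in [Fintype V] {u v z : V} {p : G.Walk u v}
    (hp : p.IsPath) (hu : z ≠ u) (hv : z ≠ v) :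
    #{l | (z, l) ∈ p.darts.map Dart.toProd} = #{l | (l, z) ∈ p.darts.map Dart.toProd} := by
  have hnodup : (p.darts.map Dart.toProd).Nodup :=
    (darts_nodup_of_support_nodup hp.support_nodup).map Dart.toProd_injective
  have hswap : ∀ l, (l, z) ∈ p.darts.map Dart.toProd ↔
      (z, l) ∈ (p.darts.map Dart.toProd).map Prod.swap := by
    simp [List.mem_map, Prod.swap_eq_iff_eq_swap]
  simp_rw [hswap, hnodup.card_filter_mem_eq_count_map_fst,
    (hnodup.map Prod.swap_injective).card_filter_mem_eq_count_map_fst, List.map_map]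
  exact p.count_map_fst_darts_eq_count_map_snd_darts hu hv

theorem Walk.IsPath.reachable_deleteEdges_of_mem_darts {k l : V} :
    ∀ {u v : V} {p : G.Walk u v}, p.IsPath → (k, l) ∈ p.darts.map Dart.toProd →
      (G.deleteEdges {s(k, l)}).Reachable u k ∧ (G.deleteEdges {s(k, l)}).Reachable l v
  | _, _, .nil, _, h => by simp at h
  | u, _, .cons (v := x) hux q, hp, h => by
    rw [Walk.cons_isPath_iff] at hp
    simp only [Walk.darts_cons, List.map_cons, List.mem_cons] at h
    rcases h with h | h
    · obtain ⟨rfl, rfl⟩ := Prod.ext_iff.mp h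
      refine ⟨.rfl, ⟨q.toDeleteEdges _ ?_⟩⟩
      rintro e he rfl
      exact hp.2 (q.fst_mem_support_of_mem_edges he)
    · obtain ⟨hxk, hlv⟩ := hp.1.reachable_deleteEdges_of_mem_darts h
      obtain ⟨d, hd, hdkl⟩ := List.mem_map.mp h
      have hkl : s(k, l) ∈ q.edges := List.mem_map.mpr ⟨d, hd, by rw [Dart.edge, hdkl]⟩
      have hne : s(u, x) ≠ s(k, l) := fun heq => hp.2 (q.fst_mem_support_of_mem_edges (heq ▸ hkl))
      have hadj : (G.deleteEdges {s(k, l)}).Adj u x := by simp [hux, hne]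
      exact ⟨hadj.reachable.trans hxk, hlv⟩

theorem IsAcyclic.mem_darts_iff {T : SimpleGraph V} (hT : T.IsAcyclic) {u v k l : V}
    {p : T.Walk u v} (hp : p.IsPath) :
    (k, l) ∈ p.darts.map Dart.toProd ↔ T.Adj k l ∧
      (T.deleteEdges {s(k, l)}).Reachable u k ∧ (T.deleteEdges {s(k, l)}).Reachable l v := by
  refine ⟨fun h => ⟨?_, hp.reachable_deleteEdges_of_mem_darts h⟩, fun ⟨hkl, huk, hlv⟩ => ?_⟩
  · obtain ⟨d, -, hd⟩ := List.mem_map.mp h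
    simpa [hd] using d.adj
  have hbridge : ¬ (T.deleteEdges {s(k, l)}).Reachable k l :=
    isAcyclic_iff_forall_adj_isBridge.mp hT hkl
  have huv : ¬ (T.deleteEdges {s(k, l)}).Reachable u v :=
    fun h => hbridge (huk.symm.trans (h.trans hlv.symm))
  obtain ⟨d, hd, hde⟩ := List.mem_map.mp (p.mem_edges_of_not_reachable_deleteEdges huv)
  rcases Sym2.eq_iff.mp hde with ⟨hk, hl⟩ | ⟨hl, hk⟩
  · exact List.mem_map.mpr ⟨d, hd, Prod.ext hk hl⟩
  · have hlk := hp.reachable_deleteEdges_of_mem_darts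
      (List.mem_map.mpr ⟨d, hd, Prod.ext hl hk⟩)
    rw [Sym2.eq_swap] at hlk
    exact absurd (huk.symm.trans hlk.1) hbridge

end SimpleGraph

namespace ElecNet.Network

open SimpleGraph

variable (E : Network)

theorem weight_pos {H : SimpleGraph (Fin E.n)} (hH : H ≤ E.graph) : 0 < E.weight H := by
  refine Finset.prod_pos fun e he => ?_
  rw [Set.Finite.mem_toFinset] at he
  induction e with
  | h a b => exact E.c_pos a b (hH he)

theorem weight_sup_edge {F : SimpleGraph (Fin E.n)} {k l : Fin E.n} (hkl : k ≠ l)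
    (hF : ¬ F.Adj k l) : E.weight (F ⊔ edge k l) = E.c k l * E.weight F := by
  have hedges : (Set.toFinite (F ⊔ edge k l).edgeSet).toFinset =
      insert s(k, l) (Set.toFinite F.edgeSet).toFinset := by
    ext e
    simp [edgeSet_sup, edgeSet_edge_of_ne hkl]
  rw [weight, weight, hedges, Finset.prod_insert (by simpa using hF)]
  rfl

def laplacian (f : Fin E.n → ℝ) (k : Fin E.n) : ℝ := ∑ l, E.c k l * (f k - f l)

section Harmonic

variable {E}

theorem eq_of_adj_of_sum_mul_sub_sq_eq_zero {f : Fin E.n → ℝ}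
    (hf : ∑ k, ∑ l, E.c k l * (f k - f l) ^ 2 = 0) {k l : Fin E.n} (hkl : E.graph.Adj k l) :
    f k = f l := by
  have hnonneg : ∀ k l, 0 ≤ E.c k l * (f k - f l) ^ 2 := fun k l => by
    by_cases h : E.graph.Adj k l
    · exact mul_nonneg (E.c_pos k l h).le (sq_nonneg _)
    · rw [E.c_zero k l h, zero_mul]
  have hterm := (Finset.sum_eq_zero_iff_of_nonneg fun l _ => hnonneg k l).mp
    ((Finset.sum_eq_zero_iff_of_nonneg fun k _ => Finset.sum_nonneg fun l _ => hnonneg k l).mp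
      hf k (Finset.mem_univ k)) l (Finset.mem_univ l)
  rw [mul_eq_zero, sq_eq_zero_iff, sub_eq_zero] at hterm
  exact hterm.resolve_left (E.c_pos k l hkl).ne'

theorem eq_zero_of_laplacian_eq_zero {f : Fin E.n → ℝ}
    (hbdry : ∀ k : Fin E.n, (k : ℕ) < E.m → f k = 0)
    (hint : ∀ k : Fin E.n, E.m ≤ (k : ℕ) → E.laplacian f k = 0) (x : Fin E.n) : f x = 0 := by
  have henergy : ∑ k, ∑ l, E.c k l * (f k - f l) ^ 2 = 0 := by
    rw [Finset.sum_sum_mul_sub_sq E.c_symm, mul_eq_zero, or_iff_right two_ne_zero]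
    refine Finset.sum_eq_zero fun k _ => ?_
    rcases lt_or_ge (k : ℕ) E.m with hk | hk
    · rw [hbdry k hk, zero_mul]
    · rw [← laplacian, hint k hk, mul_zero]
  let b : Fin E.n := ⟨0, E.m_pos.trans_le E.m_le⟩
  rw [(E.connected.preconnected x b).apply_eq_of_forall_adj
    fun _ _ => eq_of_adj_of_sum_mul_sub_sq_eq_zero henergy, hbdry b E.m_pos]

end Harmonic

section TwoTerminal

variable (v₀ v₁ : Fin E.n)

noncomputable def separatingForests : Finset (SimpleGraph (Fin E.n)) :=
  {H | E.IsSpanningForest H ∧ Nat.card H.ConnectedComponent = 2 ∧ ¬ H.Reachable v₀ v₁}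

noncomputable def separatingWeight : ℝ := ∑ H ∈ E.separatingForests v₀ v₁, E.weight H

noncomputable def forestPotential (z : Fin E.n) : ℝ :=
  ∑ H ∈ E.separatingForests v₀ v₁ with H.Reachable v₀ z, E.weight H

noncomputable def pathTrees (k l : Fin E.n) : Finset (SimpleGraph (Fin E.n)) :=
  {T | T ≤ E.graph ∧ T.IsTree ∧ T.Adj k l ∧
    (T.deleteEdges {s(k, l)}).Reachable v₀ k ∧ (T.deleteEdges {s(k, l)}).Reachable l v₁}

noncomputable def treeFlow (k l : Fin E.n) : ℝ := ∑ T ∈ E.pathTrees v₀ v₁ k l, E.weight T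

variable {E v₀ v₁}

theorem mem_separatingForests {H : SimpleGraph (Fin E.n)} :
    H ∈ E.separatingForests v₀ v₁ ↔ H ≤ E.graph ∧ H.IsAcyclic ∧ ¬ H.Reachable v₀ v₁ ∧
      ∀ x, H.Reachable x v₀ ∨ H.Reachable x v₁ := by
  rw [separatingForests, Finset.mem_filter_univ, IsSpanningForest]
  constructor
  · rintro ⟨⟨hle, hac⟩, hcard, hsep⟩
    exact ⟨hle, hac, hsep, (card_connectedComponent_eq_two_iff hsep).mp hcard⟩
  · rintro ⟨hle, hac, hsep, hall⟩
    exact ⟨⟨hle, hac⟩, (card_connectedComponent_eq_two_iff hsep).mpr hall, hsep⟩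

theorem reachable_right_iff_not_reachable_left {H : SimpleGraph (Fin E.n)}
    (hH : H ∈ E.separatingForests v₀ v₁) (x : Fin E.n) :
    H.Reachable x v₁ ↔ ¬ H.Reachable v₀ x := by
  obtain ⟨-, -, hsep, hall⟩ := mem_separatingForests.mp hH
  exact ⟨fun h₁ h₀ => hsep (h₀.trans h₁), fun h => (hall x).resolve_left fun h' => h h'.symm⟩

theorem deleteEdges_mem_separatingForests {T : SimpleGraph (Fin E.n)} {k l : Fin E.n}
    (hT : T ∈ E.pathTrees v₀ v₁ k l) : T.deleteEdges {s(k, l)} ∈ E.separatingForests v₀ v₁ := by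
  rw [pathTrees, Finset.mem_filter_univ] at hT
  obtain ⟨hle, htree, hkl, hk, hl⟩ := hT
  have hbridge : ¬ (T.deleteEdges {s(k, l)}).Reachable k l :=
    isAcyclic_iff_forall_adj_isBridge.mp htree.isAcyclic hkl
  refine mem_separatingForests.mpr ⟨(deleteEdges_le _).trans hle,
    htree.isAcyclic.anti (deleteEdges_le _), fun h => hbridge (hk.symm.trans (h.trans hl.symm)),
    fun x => ?_⟩
  exact ((htree.connected.preconnected x k).deleteEdges_or).imp (·.trans hk.symm) (·.trans hl)

theorem sup_edge_mem_pathTrees {F : SimpleGraph (Fin E.n)} {k l : Fin E.n}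
    (hkl : E.graph.Adj k l) (hF : F ∈ E.separatingForests v₀ v₁) (hk : F.Reachable v₀ k)
    (hl : F.Reachable l v₁) : F ⊔ edge k l ∈ E.pathTrees v₀ v₁ k l := by
  obtain ⟨hle, hac, hsep, hall⟩ := mem_separatingForests.mp hF
  have hnkl : ¬ F.Reachable k l := fun h => hsep (hk.trans (h.trans hl))
  have hdel : (F ⊔ edge k l).deleteEdges {s(k, l)} = F := by
    rw [deleteEdges, ← edge, sup_sdiff_right_self, sdiff_edge F fun h => hnkl h.reachable]
  have hadj : (F ⊔ edge k l).Adj k l := Or.inr ((edge_adj ..).mpr ⟨.inl ⟨rfl, rfl⟩, hkl.ne⟩)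
  have hv₁v₀ : (F ⊔ edge k l).Reachable v₁ v₀ :=
    ((hk.mono le_sup_left).trans (hadj.reachable.trans (hl.mono le_sup_left))).symm
  have hconn : (F ⊔ edge k l).Connected := by
    refine (connected_iff_exists_forall_reachable _).mpr ⟨v₀, fun x => ?_⟩
    rcases hall x with hx | hx
    · exact (hx.mono le_sup_left).symm
    · exact (hv₁v₀.symm.trans (hx.mono le_sup_left).symm)
  rw [pathTrees, Finset.mem_filter_univ, hdel]
  exact ⟨sup_le hle ((edge_le_iff _).mpr (.inr hkl)), ⟨hconn, hac.sup_edge_of_not_reachable hnkl⟩,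
    hadj, hk, hl⟩

theorem treeFlow_eq {k l : Fin E.n} (hkl : E.graph.Adj k l) :
    E.treeFlow v₀ v₁ k l =
      E.c k l * ∑ F ∈ E.separatingForests v₀ v₁ with F.Reachable v₀ k ∧ F.Reachable l v₁,
        E.weight F := by
  have hnadj : ∀ F ∈ E.separatingForests v₀ v₁,
      F.Reachable v₀ k → F.Reachable l v₁ → ¬ F.Adj k l := fun F hF hk hl h =>
    (mem_separatingForests.mp hF).2.2.1 (hk.trans (h.reachable.trans hl))
  rw [Finset.mul_sum, treeFlow]
  symm
  refine Finset.sum_nbij' (· ⊔ edge k l) (·.deleteEdges {s(k, l)}) ?_ ?_ ?_ ?_ ?_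
  · intro F hF
    rw [Finset.mem_filter] at hF
    exact sup_edge_mem_pathTrees hkl hF.1 hF.2.1 hF.2.2
  · intro T hT
    refine Finset.mem_filter.mpr ⟨deleteEdges_mem_separatingForests hT, ?_⟩
    rw [pathTrees, Finset.mem_filter_univ] at hT
    exact hT.2.2.2
  · intro F hF
    rw [Finset.mem_filter] at hF
    rw [deleteEdges, ← edge, sup_sdiff_right_self, sdiff_edge F (hnadj F hF.1 hF.2.1 hF.2.2)]
  · intro T hT
    rw [pathTrees, Finset.mem_filter_univ] at hT
    exact sdiff_sup_cancel ((edge_le_iff _).mpr (.inr hT.2.2.1))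
  · intro F hF
    rw [Finset.mem_filter] at hF
    exact (E.weight_sup_edge hkl.ne (hnadj F hF.1 hF.2.1 hF.2.2)).symm

theorem c_mul_forestPotential_sub (k l : Fin E.n) :
    E.c k l * (E.forestPotential v₀ v₁ k - E.forestPotential v₀ v₁ l) =
      E.treeFlow v₀ v₁ k l - E.treeFlow v₀ v₁ l k := by
  by_cases hkl : E.graph.Adj k l
  · rw [treeFlow_eq hkl, treeFlow_eq hkl.symm, E.c_symm l k, ← mul_sub, forestPotential,
      forestPotential, Finset.sum_filter, Finset.sum_filter, Finset.sum_filter, Finset.sum_filter,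
      ← Finset.sum_sub_distrib, ← Finset.sum_sub_distrib]
    congr 1
    refine Finset.sum_congr rfl fun F hF => ?_
    have hk := reachable_right_iff_not_reachable_left hF k
    have hl := reachable_right_iff_not_reachable_left hF l
    by_cases h₀k : F.Reachable v₀ k <;> by_cases h₀l : F.Reachable v₀ l <;> simp_all
  · have hempty : ∀ k l, ¬ E.graph.Adj k l → E.pathTrees v₀ v₁ k l = ∅ := fun k l h => by
      rw [pathTrees, Finset.filter_eq_empty_iff]
      exact fun T _ hT => h (hT.1 hT.2.2.1)
    rw [E.c_zero k l hkl, zero_mul, treeFlow, treeFlow, hempty k l hkl,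
      hempty l k fun h => hkl h.symm, Finset.sum_empty, sub_zero]

theorem mem_pathTrees_iff {T : SimpleGraph (Fin E.n)} (hT : T ≤ E.graph) (htree : T.IsTree)
    {p : T.Walk v₀ v₁} (hp : p.IsPath) {k l : Fin E.n} :
    T ∈ E.pathTrees v₀ v₁ k l ↔ (k, l) ∈ p.darts.map Dart.toProd := by
  rw [pathTrees, Finset.mem_filter_univ, htree.isAcyclic.mem_darts_iff hp]
  exact ⟨fun h => h.2.2, fun h => ⟨hT, htree, h⟩⟩

theorem card_pathTrees_out_eq_in (T : SimpleGraph (Fin E.n)) {z : Fin E.n} (hz₀ : z ≠ v₀)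
    (hz₁ : z ≠ v₁) :
    #{l | T ∈ E.pathTrees v₀ v₁ z l} = #{l | T ∈ E.pathTrees v₀ v₁ l z} := by
  by_cases hT : T ≤ E.graph ∧ T.IsTree
  · obtain ⟨p, hp, -⟩ := hT.2.existsUnique_path v₀ v₁
    convert hp.card_out_eq_card_in hz₀ hz₁ using 3 <;> exact mem_pathTrees_iff hT.1 hT.2 hp
  · have hnot : ∀ k l, T ∉ E.pathTrees v₀ v₁ k l := fun k l h => by
      rw [pathTrees, Finset.mem_filter_univ] at h
      exact hT ⟨h.1, h.2.1⟩
    simp [hnot]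

theorem sum_treeFlow_out_eq_in {z : Fin E.n} (hz₀ : z ≠ v₀) (hz₁ : z ≠ v₁) :
    ∑ l, E.treeFlow v₀ v₁ z l = ∑ l, E.treeFlow v₀ v₁ l z := by
  have hcount : ∀ f : Fin E.n → Finset (SimpleGraph (Fin E.n)),
      ∑ l, ∑ T ∈ f l, E.weight T = ∑ T, #{l | T ∈ f l} • E.weight T := fun f => by
    rw [Finset.sum_comm' (t' := Finset.univ) (s' := fun T => {l | T ∈ f l}) (by simp)]
    simp
  simp only [treeFlow, hcount, card_pathTrees_out_eq_in _ hz₀ hz₁]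

theorem separatingWeight_pos (h : v₀ ≠ v₁) : 0 < E.separatingWeight v₀ v₁ := by
  obtain ⟨T, hT, htree⟩ := E.connected.exists_isTree_le
  obtain ⟨p, hp, -⟩ := htree.existsUnique_path v₀ v₁
  have hd := List.mem_map_of_mem (f := Dart.toProd) (p.firstDart_mem_darts (p.not_nil_of_ne h))
  have hF := deleteEdges_mem_separatingForests ((E.mem_pathTrees_iff hT htree hp).mpr hd)
  exact Finset.sum_pos (fun H hH => E.weight_pos (mem_separatingForests.mp hH).1) ⟨_, hF⟩

theorem pathTrees_swap (k l : Fin E.n) :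
    E.pathTrees v₀ v₁ l k = Finset.univ.filter fun T => T ≤ E.graph ∧ T.IsTree ∧ T.Adj k l ∧
      (T.deleteEdges {s(k, l)}).Reachable v₀ l ∧ (T.deleteEdges {s(k, l)}).Reachable k v₁ := by
  simp only [pathTrees, Sym2.eq_swap (a := l), adj_comm]

theorem laplacian_forestPotential {z : Fin E.n} (hz₀ : z ≠ v₀) (hz₁ : z ≠ v₁) :
    E.laplacian (E.forestPotential v₀ v₁) z = 0 := by
  simp only [laplacian, c_mul_forestPotential_sub]
  rw [Finset.sum_sub_distrib, sum_treeFlow_out_eq_in hz₀ hz₁, sub_self]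

theorem forestPotential_left : E.forestPotential v₀ v₁ v₀ = E.separatingWeight v₀ v₁ := by
  rw [forestPotential, Finset.filter_true_of_mem fun _ _ => .rfl, separatingWeight]

theorem forestPotential_right : E.forestPotential v₀ v₁ v₁ = 0 := by
  rw [forestPotential, Finset.filter_false_of_mem fun H hH => (mem_separatingForests.mp hH).2.2.1,
    Finset.sum_empty]

theorem voltage_mul_separatingWeight (h2 : E.m = 2) (hv₀ : (v₀ : ℕ) = 0) (hv₁ : (v₁ : ℕ) = 1)
    {U : Fin E.n → ℝ} (hU : ∀ k : Fin E.n, E.m ≤ (k : ℕ) → E.laplacian U k = 0)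
    (hU₀ : U v₀ = 1) (hU₁ : U v₁ = 0) (z : Fin E.n) :
    U z * E.separatingWeight v₀ v₁ = E.forestPotential v₀ v₁ z := by
  refine sub_eq_zero.mp (eq_zero_of_laplacian_eq_zero (f := fun z =>
    U z * E.separatingWeight v₀ v₁ - E.forestPotential v₀ v₁ z) (fun k hk => ?_) (fun k hk => ?_) z)
  · obtain rfl | rfl : k = v₀ ∨ k = v₁ := by omega
    · rw [hU₀, one_mul, forestPotential_left, sub_self]
    · rw [hU₁, zero_mul, forestPotential_right, sub_self]
  · have hk₀ : k ≠ v₀ := fun h => by omega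
    have hk₁ : k ≠ v₁ := fun h => by omega
    calc E.laplacian (fun z => U z * E.separatingWeight v₀ v₁ - E.forestPotential v₀ v₁ z) k
        = E.laplacian U k * E.separatingWeight v₀ v₁ -
            E.laplacian (E.forestPotential v₀ v₁) k := by
          simp only [laplacian, Finset.sum_mul, ← Finset.sum_sub_distrib]
          exact Finset.sum_congr rfl fun l _ => by ring
      _ = 0 := by rw [hU k hk, laplacian_forestPotential hk₀ hk₁, zero_mul, sub_zero]

end TwoTerminal

end ElecNet.Network

namespace ElecNet

/-- **Combinatorial formula for the currents in a two-terminal electrical circuit**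
(Proposition 2.7(2)).  Let the boundary vertices be `v₀` ("1") and `v₁` ("2") with
prescribed voltages `1` and `0`.  Then `w(1|2) > 0` and for every ordered pair of vertices
`k, l`, `I k l · w(1|2) = Σ_{T_{kl}} w(T_{kl}) − Σ_{T_{lk}} w(T_{lk})`, where the sums are
over all spanning trees whose oriented path from `v₀` to `v₁` traverses the edge `kl` in
the direction from `k` to `l` (respectively from `l` to `k`): that is, trees `T`
containing the edge `kl` such that after its deletion `v₀` is joined to `k` and `l` is
joined to `v₁` (respectively `v₀` to `l` and `k` to `v₁`). -/
theorem current_two_terminal (E : Network) (h2 : E.m = 2)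
    (U : Fin E.n → ℝ) (I : Fin E.n → Fin E.n → ℝ)
    (hOhm : ∀ k l, I k l = E.c k l * (U k - U l))
    (hKir : ∀ k : Fin E.n, E.m ≤ (k : ℕ) → ∑ l, I k l = 0) :
    ∀ v₀ v₁ : Fin E.n, (v₀ : ℕ) = 0 → (v₁ : ℕ) = 1 → U v₀ = 1 → U v₁ = 0 →
      (0 < ∑ H ∈ Finset.univ.filter (fun H => E.IsSpanningForest H ∧
            Nat.card H.ConnectedComponent = 2 ∧ ¬ H.Reachable v₀ v₁), E.weight H) ∧
      ∀ k l : Fin E.n,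
        I k l * (∑ H ∈ Finset.univ.filter (fun H => E.IsSpanningForest H ∧
            Nat.card H.ConnectedComponent = 2 ∧ ¬ H.Reachable v₀ v₁), E.weight H)
        = (∑ T ∈ Finset.univ.filter (fun T => T ≤ E.graph ∧ T.IsTree ∧ T.Adj k l ∧
              (T.deleteEdges {s(k, l)}).Reachable v₀ k ∧
              (T.deleteEdges {s(k, l)}).Reachable l v₁), E.weight T)
          - (∑ T ∈ Finset.univ.filter (fun T => T ≤ E.graph ∧ T.IsTree ∧ T.Adj k l ∧
              (T.deleteEdges {s(k, l)}).Reachable v₀ l ∧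
              (T.deleteEdges {s(k, l)}).Reachable k v₁), E.weight T) := by
  intro v₀ v₁ hv₀ hv₁ hU₀ hU₁
  have hU := E.voltage_mul_separatingWeight h2 hv₀ hv₁
    (fun k hk => by simp only [Network.laplacian, ← hOhm, hKir k hk]) hU₀ hU₁
  refine ⟨E.separatingWeight_pos fun h => by omega, fun k l => ?_⟩
  rw [← Network.pathTrees_swap]
  calc I k l * E.separatingWeight v₀ v₁
      = E.c k l * (U k * E.separatingWeight v₀ v₁ - U l * E.separatingWeight v₀ v₁) := by
        rw [hOhm]; ring
    _ = E.treeFlow v₀ v₁ k l - E.treeFlow v₀ v₁ l k := by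
        rw [hU, hU, Network.c_mul_forestPotential_sub]

end ElecNet
end
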